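/- (Courant nodal domain theorem for signed hypergraphs, weak version.) Let Γ=(H,σ) be a signed hypergraph whose underlying hypergraph H has c connected components, let L be its normalized Laplacian, λ_k its k-th smallest eigenvalue, and f_k an eigenfunction for λ_k. Then the number of weak nodal domains satisfies 𝔚(f_k) ≤ k + c − 1. In particular, if H is connected then 𝔚(f_k) ≤ k. -/

import Mathlib

attribute [local instance] Classical.propDecidable

open Finset Matrix

/-! ## Signed hypergraphs (edges indexed by a type `E`; `sign v e ∈ {0, 1, -1}`,
nonzero exactly on incidences) -/

structure SignedHypergraph (V E : Type) where
  sign : V → E → ℝ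
  sign_values : ∀ v e, sign v e = 0 ∨ sign v e = 1 ∨ sign v e = -1

namespace SignedHypergraph

variable {V E : Type} [Fintype V] [Fintype E] [DecidableEq V] [DecidableEq E]

/-- The vertex set of an edge. -/
noncomputable def edgeVerts (G : SignedHypergraph V E) (e : E) : Finset V :=
  Finset.univ.filter fun v => G.sign v e ≠ 0

/-- The degree of a vertex. -/
noncomputable def deg (G : SignedHypergraph V E) (v : V) : ℕ :=
  (Finset.univ.filter fun e : E => G.sign v e ≠ 0).card

/-- The sign of an edge: `sgn e = (-1)^(|e|-1) ∏_{v ∈ e} σ(v,e)`. -/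
noncomputable def edgeSign (G : SignedHypergraph V E) (e : E) : ℝ :=
  (-1 : ℝ) ^ ((G.edgeVerts e).card - 1) * ∏ v ∈ G.edgeVerts e, G.sign v e

/-- The signed adjacency matrix. -/
noncomputable def adj (G : SignedHypergraph V E) : Matrix V V ℝ :=
  Matrix.of fun x y =>
    if x = y then 0
    else ∑ e ∈ Finset.univ.filter (fun e : E => G.sign x e ≠ 0 ∧ G.sign y e ≠ 0), G.edgeSign e

/-- The normalized Laplacian `L = I - D⁻¹ A`. -/
noncomputable def lap (G : SignedHypergraph V E) : Matrix V V ℝ :=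
  Matrix.of fun x y => (if x = y then (1 : ℝ) else 0) - G.adj x y / (G.deg x : ℝ)

/-- The degree-weighted inner product `⟨f, g⟩ = ∑ v deg(v) f(v) g(v)`. -/
noncomputable def dInner (G : SignedHypergraph V E) (f g : V → ℝ) : ℝ :=
  ∑ v : V, (G.deg v : ℝ) * f v * g v

/-- Two vertices share an edge. -/
def Adjacent (G : SignedHypergraph V E) (x y : V) : Prop :=
  ∃ e : E, G.sign x e ≠ 0 ∧ G.sign y e ≠ 0

/-- The underlying hypergraph is connected. -/
def Connected (G : SignedHypergraph V E) : Prop :=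
  ∀ x y : V, Relation.ReflTransGen G.Adjacent x y

/-- One step of a strong nodal domain path: `x, y` in a common edge `e` with
`f x · sgn e · f y > 0`. -/
def sStep (G : SignedHypergraph V E) (f : V → ℝ) (x y : V) : Prop :=
  ∃ e : E, G.sign x e ≠ 0 ∧ G.sign y e ≠ 0 ∧ 0 < f x * G.edgeSign e * f y

/-- The number `𝔖(f)` of strong nodal domains: equivalence classes of the support of `f`
under joining by S-paths. -/
noncomputable def strongDomainCount (G : SignedHypergraph V E) (f : V → ℝ) : ℕ :=
  Set.ncard {D : Set V | ∃ w, f w ≠ 0 ∧ D = {x | Relation.ReflTransGen (G.sStep f) w x}}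

/-- A weak nodal domain path: a walk along edges such that any two consecutive nonzeros
`v i`, `v j` of `f` (joined through zeros by the edges `e i, …, e (j-1)`) satisfy
`f (v i) · sgn (e i) ⋯ sgn (e (j-1)) · f (v j) > 0`. -/
def IsWPath (G : SignedHypergraph V E) (f : V → ℝ) {ℓ : ℕ}
    (v : Fin (ℓ + 1) → V) (e : Fin ℓ → E) : Prop :=
  (∀ t : Fin ℓ, G.sign (v t.castSucc) (e t) ≠ 0 ∧ G.sign (v t.succ) (e t) ≠ 0) ∧
  ∀ i j : Fin (ℓ + 1), i < j → f (v i) ≠ 0 → f (v j) ≠ 0 →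
    (∀ k : Fin (ℓ + 1), i < k → k < j → f (v k) = 0) →
    0 < f (v i) *
        (∏ t : Fin ℓ, if (i : ℕ) ≤ (t : ℕ) ∧ (t : ℕ) < (j : ℕ) then G.edgeSign (e t) else 1) *
        f (v j)

/-- `x` and `y` are joined by a W-path (or equal). -/
def wRel (G : SignedHypergraph V E) (f : V → ℝ) (x y : V) : Prop :=
  x = y ∨ ∃ (ℓ : ℕ) (v : Fin (ℓ + 1) → V) (e : Fin ℓ → E),
    G.IsWPath f v e ∧ v 0 = x ∧ v (Fin.last ℓ) = y

/-- The weak nodal domain of a vertex `w` in the support of `f`: the equivalence class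
of `w` under the W-path relation on the support, enlarged by the zero vertices
W-path-connected to it. -/
def weakDomain (G : SignedHypergraph V E) (f : V → ℝ) (w : V) : Set V :=
  {x | ∃ y, f y ≠ 0 ∧ G.wRel f w y ∧ G.wRel f x y}

def IsWeakNodalDomain (G : SignedHypergraph V E) (f : V → ℝ) (D : Set V) : Prop :=
  ∃ w, f w ≠ 0 ∧ D = G.weakDomain f w

/-- The number `𝔚(f)` of weak nodal domains. -/
noncomputable def weakDomainCount (G : SignedHypergraph V E) (f : V → ℝ) : ℕ :=
  Set.ncard {D : Set V | G.IsWeakNodalDomain f D}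

/-- The number of connected components of the subhypergraph induced on the vertex set `A`
with edges restricted to those satisfying `P`. -/
noncomputable def componentsOn (G : SignedHypergraph V E) (A : Finset V) (P : E → Prop) : ℕ :=
  Set.ncard {C : Set V | ∃ v ∈ A, C =
    {u | u ∈ A ∧ Relation.ReflTransGen
      (fun x y => x ∈ A ∧ y ∈ A ∧ ∃ e, P e ∧ G.sign x e ≠ 0 ∧ G.sign y e ≠ 0) v u}}

/-- The cyclomatic number `l = ∑_e (|e|-1) - |V| + c` of the subhypergraph induced on `A`
with edges restricted to those satisfying `P`. -/
noncomputable def cyclomaticOn (G : SignedHypergraph V E) (A : Finset V) (P : E → Prop) : ℤ :=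
  (∑ e ∈ Finset.univ.filter (fun e : E => P e ∧ (G.edgeVerts e ∩ A).Nonempty),
      (((G.edgeVerts e ∩ A).card : ℤ) - 1)) -
    (A.card : ℤ) + (G.componentsOn A P : ℤ)

/-- An edge all of whose pairs of (distinct) vertices `x, y` satisfy
`f x · sgn e · f y > 0`. -/
def posEdge (G : SignedHypergraph V E) (f : V → ℝ) (e : E) : Prop :=
  ∀ x y : V, G.sign x e ≠ 0 → G.sign y e ≠ 0 → x ≠ y → 0 < f x * G.edgeSign e * f y

/-- An edge of the subhypergraph `S` on the support of `f`. -/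
def sEdge (G : SignedHypergraph V E) (f : V → ℝ) (e : E) : Prop :=
  (∀ v, G.sign v e ≠ 0 → f v ≠ 0) ∧ G.posEdge f e

/-- The subhypergraph with edge set `P` contains a cycle. -/
def HasCycle (G : SignedHypergraph V E) (P : E → Prop) : Prop :=
  ∃ (q : ℕ) (v : Fin (q + 1) → V) (e : Fin q → E), 2 ≤ q ∧
    Function.Injective (fun t : Fin q => v t.castSucc) ∧ Function.Injective e ∧
    v (Fin.last q) = v 0 ∧
    ∀ t : Fin q, P (e t) ∧ G.sign (v t.castSucc) (e t) ≠ 0 ∧ G.sign (v t.succ) (e t) ≠ 0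

/-- A tree-like vertex: its removal increases the number of connected components
by `deg x - 1`. -/
def Treelike (G : SignedHypergraph V E) (x : V) : Prop :=
  (G.componentsOn (Finset.univ.erase x) (fun _ => True) : ℤ) =
    (G.componentsOn Finset.univ (fun _ => True) : ℤ) + (G.deg x : ℤ) - 1

/-- The Fiedler zero set of `f`: zeros `x` of `f` such that either all vertices sharing an
edge with `x` are zeros, or `x` is not tree-like. -/
def fiedlerSet (G : SignedHypergraph V E) (f : V → ℝ) : Set V :=
  {x | f x = 0 ∧ ((∀ y, G.Adjacent x y → f y = 0) ∨ ¬ G.Treelike x)}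

/-- Weak deletion of the vertices in `R`: each vertex of `R` is removed from every hyperedge
(possibly creating empty edges). -/
def weakDelete (G : SignedHypergraph V E) (R : Finset V) :
    SignedHypergraph {v : V // v ∉ R} E :=
  ⟨fun v e => G.sign v.1 e, fun v e => G.sign_values v.1 e⟩

end SignedHypergraph

/-! ## Plain hypergraphs -/

structure PlainHypergraph (V : Type) where
  verts : Finset V
  edges : Finset (Finset V)
  edge_subset : ∀ e ∈ edges, e ⊆ verts

namespace PlainHypergraph

variable {V : Type} [DecidableEq V]

def Adjacent (H : PlainHypergraph V) (x y : V) : Prop := ∃ e ∈ H.edges, x ∈ e ∧ y ∈ e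

def Connected (H : PlainHypergraph V) : Prop :=
  ∀ x ∈ H.verts, ∀ y ∈ H.verts, Relation.ReflTransGen H.Adjacent x y

/-- A cycle: an alternating closed sequence of distinct vertices and distinct edges
`v 0, e 0, v 1, e 1, …, v q = v 0` of length `q ≥ 2` with `v t, v (t+1) ∈ e t`. -/
def IsCycle (H : PlainHypergraph V) {q : ℕ} (v : Fin (q + 1) → V) (e : Fin q → Finset V) : Prop :=
  2 ≤ q ∧ Function.Injective (fun t : Fin q => v t.castSucc) ∧ Function.Injective e ∧
    v (Fin.last q) = v 0 ∧
    ∀ t : Fin q, e t ∈ H.edges ∧ v t.castSucc ∈ e t ∧ v t.succ ∈ e t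

def Acyclic (H : PlainHypergraph V) : Prop :=
  ¬ ∃ (q : ℕ) (v : Fin (q + 1) → V) (e : Fin q → Finset V), H.IsCycle v e

/-- The number of connected components. -/
noncomputable def ncomp (H : PlainHypergraph V) : ℕ :=
  Set.ncard {C : Set V | ∃ v ∈ H.verts, C = {u | Relation.ReflTransGen H.Adjacent v u}}

/-- The cyclomatic number `l(H) = ∑_e (|e|-1) - |V| + c(H)`. -/
noncomputable def cyclomatic (H : PlainHypergraph V) : ℤ :=
  (∑ e ∈ H.edges, ((e.card : ℤ) - 1)) - (H.verts.card : ℤ) + (H.ncomp : ℤ)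

def degree (H : PlainHypergraph V) (x : V) : ℕ := (H.edges.filter fun e => x ∈ e).card

/-- The subhypergraph induced by a vertex set `A`: edges `e ∩ A` for `e ∩ A ≠ ∅`. -/
def induced (H : PlainHypergraph V) (A : Finset V) : PlainHypergraph V where
  verts := H.verts ∩ A
  edges := (H.edges.filter fun e => (e ∩ A).Nonempty).image fun e => e ∩ A
  edge_subset := by
    intro e' he'
    simp only [Finset.mem_image, Finset.mem_filter] at he'
    obtain ⟨e, ⟨heE, -⟩, rfl⟩ := he'
    intro x hx
    rcases Finset.mem_inter.mp hx with ⟨hxe, hxA⟩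
    exact Finset.mem_inter.mpr ⟨H.edge_subset e heE hxe, hxA⟩

/-- A tree-like vertex: deleting it (induced subhypergraph on the remaining vertices)
increases the number of connected components by `deg x - 1`. -/
def Treelike (H : PlainHypergraph V) (x : V) : Prop :=
  ((H.induced (H.verts.erase x)).ncomp : ℤ) = (H.ncomp : ℤ) + (H.degree x : ℤ) - 1

/-- Removal of a vertex together with all edges incident to it. -/
def deleteVert (H : PlainHypergraph V) (y : V) : PlainHypergraph V where
  verts := H.verts.erase y
  edges := H.edges.filter fun e => y ∉ e
  edge_subset := by
    intro e he
    rcases Finset.mem_filter.mp he with ⟨heE, hy⟩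
    intro x hx
    exact Finset.mem_erase.mpr ⟨fun h => hy (h ▸ hx), H.edge_subset e heE hx⟩

/-- A spanning hyperforest of `H`: a maximal acyclic spanning subhypergraph. -/
def IsSpanningHyperforest (H T : PlainHypergraph V) : Prop :=
  T.verts = H.verts ∧ T.edges ⊆ H.edges ∧ T.Acyclic ∧
    ∀ T' : PlainHypergraph V, T'.verts = H.verts → T'.edges ⊆ H.edges → T'.Acyclic →
      T.edges ⊆ T'.edges → T'.edges = T.edges

end PlainHypergraph

/-- The positive index of inertia of a real matrix: the number of positive roots of its
characteristic polynomial, counted with multiplicity. -/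
noncomputable def posInertia {m : Type} [Fintype m] [DecidableEq m] (M : Matrix m m ℝ) : ℕ :=
  (M.charpoly.roots.filter fun x => 0 < x).card

/-- The bordered matrix `[[B, a], [aᵀ, b]]`. -/
def borderMatrix {n : ℕ} (B : Matrix (Fin n) (Fin n) ℝ) (a : Fin n → ℝ) (b : ℝ) :
    Matrix (Fin n ⊕ Unit) (Fin n ⊕ Unit) ℝ :=
  Matrix.fromBlocks B (Matrix.of fun i _ => a i) (Matrix.of fun _ j => a j)
    (Matrix.of fun _ _ => b)

/-!
Suppose `𝔚(f) > k + c`. The functions `g = κ f` with `κ` constant on each weak nodal domain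
form a space of dimension `𝔚(f)`, so there is such a `κ`, nonzero on some domain, for which
`g` is orthogonal to the first `k` eigenfunctions and `∑_{v ∈ C} f v g v = 0` on every
connected component `C`. Because `f` is an eigenfunction for `λ = λ_k`,
`λ ⟨g, g⟩ - ⟨g, L g⟩ = -½ ∑_{x,y} A x y f x f y (κ x - κ y)²`, and `A x y f x f y ≤ 0` whenever
`x, y` lie in different weak domains; so the Rayleigh quotient of `g` is at most `λ`, and by
min-max `g` is itself a `λ`-eigenfunction and the energy vanishes: `κ` agrees across every edge
joining two nonzeros of `f`. At a zero `z` of `f`, the nonzeros reaching `z` through zeros lie in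
at most two weak domains (two of them reaching `z` with the same sign are joined by a W-path), and
`(A f) z = (A g) z = 0` forces `κ` to agree on them. So `κ` is constant on the nonzeros of each
component, and the condition on components makes it vanish there, a contradiction.
-/

def seqAppend {α : Type*} (r : ℕ) (a b : ℕ → α) : ℕ → α := fun t => if t < r then a t else b (t - r)

section SeqAppend

variable {α : Type*} {r t : ℕ} {a b : ℕ → α}

theorem seqAppend_of_lt (h : t < r) : seqAppend r a b t = a t := if_pos h

theorem seqAppend_add (t : ℕ) : seqAppend r a b (r + t) = b t := by
  simp [seqAppend]

theorem seqAppend_of_le (hab : a r = b 0) (h : t ≤ r) : seqAppend r a b t = a t := by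
  rcases h.lt_or_eq with h | rfl
  · exact seqAppend_of_lt h
  · simpa using (seqAppend_add (a := a) (b := b) 0).trans hab.symm

end SeqAppend

section Rayleigh

variable {ι M : Type*} [Fintype ι] [AddCommGroup M] [Module ℝ M]
  {B : LinearMap.BilinForm ℝ M} {L : Module.End ℝ M}

theorem LinearMap.BilinForm.apply_eq_zero_of_eigenvalue_ne (hL : LinearMap.IsAdjointPair B B L L)
    {x y : M} {μ ν : ℝ} (hx : L x = μ • x) (hy : L y = ν • y) (hμν : μ ≠ ν) : B x y = 0 := by
  have h := hL x y
  rw [hx, hy, LinearMap.map_smul₂, LinearMap.map_smul, smul_eq_mul, smul_eq_mul] at h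
  exact (mul_eq_mul_right_iff.mp h).resolve_left hμν

noncomputable def Module.Basis.eigencomponent (b : Module.Basis ι ℝ M) (lam : ι → ℝ) (g : M)
    (μ : ℝ) : M :=
  ∑ i ∈ univ.filter (fun i => lam i = μ), b.repr g i • b i

variable (b : Module.Basis ι ℝ M) (lam : ι → ℝ)

theorem Module.Basis.sum_eigencomponent (g : M) :
    ∑ μ ∈ univ.image lam, b.eigencomponent lam g μ = g := by
  conv_rhs => rw [← b.sum_repr g]
  exact sum_fiberwise_of_maps_to (fun i _ => mem_image_of_mem lam (mem_univ i)) _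

theorem Module.Basis.map_eigencomponent (heig : ∀ i, L (b i) = lam i • b i) (g : M) (μ : ℝ) :
    L (b.eigencomponent lam g μ) = μ • b.eigencomponent lam g μ := by
  simp only [Module.Basis.eigencomponent, map_sum, map_smul, heig, smul_sum]
  refine sum_congr rfl fun i hi => ?_
  rw [(mem_filter.mp hi).2, smul_comm]

theorem Module.Basis.apply_sum_smul_eigencomponent (hL : LinearMap.IsAdjointPair B B L L)
    (heig : ∀ i, L (b i) = lam i • b i) (g : M) (a : ℝ → ℝ) {μ : ℝ} (hμ : μ ∈ univ.image lam) :
    B (∑ ν ∈ univ.image lam, a ν • b.eigencomponent lam g ν) (b.eigencomponent lam g μ) =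
      a μ * B (b.eigencomponent lam g μ) (b.eigencomponent lam g μ) := by
  rw [map_sum, LinearMap.sum_apply, sum_eq_single_of_mem μ hμ fun ν _ hνμ => ?_]
  · rw [LinearMap.map_smul₂, smul_eq_mul]
  · rw [LinearMap.map_smul₂, LinearMap.BilinForm.apply_eq_zero_of_eigenvalue_ne hL
      (b.map_eigencomponent lam heig g ν) (b.map_eigencomponent lam heig g μ) hνμ, smul_zero]

theorem LinearMap.BilinForm.apply_sub_smul_self_eq_zero_of_orthogonal [LinearOrder ι]
    (hL : LinearMap.IsAdjointPair B B L L) (hB : ∀ u, 0 ≤ B u u)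
    (heig : ∀ i, L (b i) = lam i • b i) (hmono : Monotone lam) {k : ι} {g : M}
    (horth : ∀ j < k, B g (b j) = 0) (hle : B g (L g) ≤ lam k * B g g) :
    B (L g - lam k • g) (L g - lam k • g) = 0 := by
  set S := univ.image lam
  set q := b.eigencomponent lam g
  have hLg : ∑ ν ∈ S, (ν - lam k) • q ν = L g - lam k • g := by
    conv_rhs => rw [← b.sum_eigencomponent lam g]
    simp only [map_sum, b.map_eigencomponent lam heig, smul_sum, ← sum_sub_distrib, sub_smul]
    rfl
  have hq : ∀ μ ∈ S, B g (q μ) = B (q μ) (q μ) := fun μ hμ => by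
    have h := b.apply_sum_smul_eigencomponent lam hL heig g (fun _ => 1) hμ
    simp only [one_smul, one_mul, b.sum_eigencomponent] at h
    exact h
  have hlow : ∀ μ < lam k, B g (q μ) = 0 := fun μ hμ => by
    refine (map_sum _ _ _).trans (sum_eq_zero fun j hj => ?_)
    rw [map_smul, horth j (hmono.reflect_lt ((mem_filter.mp hj).2 ▸ hμ)), smul_zero]
  have hterm : ∀ μ ∈ S, 0 ≤ (μ - lam k) * B (q μ) (q μ) := fun μ hμ => by
    rcases lt_or_ge μ (lam k) with h | h
    · rw [← hq μ hμ, hlow μ h, mul_zero]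
    · exact mul_nonneg (sub_nonneg.mpr h) (hB _)
  have hsum : ∑ μ ∈ S, (μ - lam k) * B (q μ) (q μ) = B g (L g - lam k • g) := by
    rw [← hLg, map_sum]
    exact sum_congr rfl fun μ hμ => by rw [map_smul, hq μ hμ, smul_eq_mul]
  have hzero : ∀ μ ∈ S, (μ - lam k) * B (q μ) (q μ) = 0 := by
    refine (sum_eq_zero_iff_of_nonneg hterm).mp (le_antisymm ?_ (sum_nonneg hterm))
    rw [hsum, map_sub, map_smul, smul_eq_mul]
    linarith
  rw [← hLg, map_sum]
  refine sum_eq_zero fun μ hμ => ?_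
  rw [map_smul, b.apply_sum_smul_eigencomponent lam hL heig g _ hμ, smul_eq_mul, hzero μ hμ,
    mul_zero]

end Rayleigh

theorem exists_comp_mul_mem_ker {V α ι : Type*} [Fintype V] [Fintype ι] (d : V → α) (f : V → ℝ)
    (ℓ : ι → (V → ℝ) →ₗ[ℝ] ℝ)
    (h : Fintype.card ι < ((univ.filter fun v => f v ≠ 0).image d).card) :
    ∃ c : α → ℝ, (∀ i, ℓ i ((c ∘ d) * f) = 0) ∧ ∃ w, f w ≠ 0 ∧ c (d w) ≠ 0 := by
  set D := (univ.filter fun v => f v ≠ 0).image d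
  let M : (α → ℝ) →ₗ[ℝ] V → ℝ :=
    { toFun := fun c => (c ∘ d) * f
      map_add' := fun _ _ => by ext; simp [add_mul]
      map_smul' := fun _ _ => by ext; simp [mul_assoc] }
  let T := LinearMap.pi ℓ ∘ₗ M ∘ₗ Function.ExtendByZero.linearMap ℝ (Subtype.val : D → α)
  obtain ⟨γ, hγ, hγ0⟩ := (Submodule.ne_bot_iff _).mp (LinearMap.ker_ne_bot_of_finrank_lt (f := T)
    (by simpa only [Module.finrank_fintype_fun_eq_card, Fintype.card_coe] using h))
  obtain ⟨⟨a, ha⟩, hγa⟩ := Function.ne_iff.mp hγ0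
  obtain ⟨w, hw, rfl⟩ := mem_image.mp ha
  refine ⟨Function.extend Subtype.val γ 0, fun i => congrFun hγ i, w, (mem_filter.mp hw).2, ?_⟩
  rwa [show d w = ((⟨d w, ha⟩ : D) : α) from rfl, Subtype.val_injective.extend_apply]

theorem eq_zero_of_sum_mul_mul_eq_zero {V : Type*} {s : Finset V} {κ f : V → ℝ} {w : V}
    (hw : w ∈ s) (hfw : f w ≠ 0) (hκ : ∀ v ∈ s, f v ≠ 0 → κ v = κ w)
    (hs : ∑ v ∈ s, f v * (κ v * f v) = 0) : κ w = 0 := by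
  have hsum : ∑ v ∈ s, f v * (κ v * f v) = κ w * ∑ v ∈ s, f v ^ 2 := by
    rw [mul_sum]
    refine sum_congr rfl fun v hv => ?_
    by_cases hfv : f v = 0
    · simp [hfv]
    · rw [hκ v hv hfv]
      ring
  have hpos : 0 < ∑ v ∈ s, f v ^ 2 := sum_pos' (fun _ _ => sq_nonneg _) ⟨w, hw, by positivity⟩
  rw [hsum] at hs
  exact (mul_eq_zero.mp hs).resolve_right hpos.ne'

namespace SignedHypergraph

variable {V E : Type}

/- Walks are indexed by `ℕ` here (entries past the end are irrelevant), which makes appending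
and reversing them easier than for the `Fin`-indexed walks of `IsWPath`; `isWPath_iff_isSeqWPath`
translates between the two. -/
def IsWalk (G : SignedHypergraph V E) (r : ℕ) (v : ℕ → V) (e : ℕ → E) : Prop :=
  ∀ t < r, G.sign (v t) (e t) ≠ 0 ∧ G.sign (v (t + 1)) (e t) ≠ 0

section Walks

variable {G : SignedHypergraph V E} {r : ℕ} {v : ℕ → V} {e : ℕ → E}

theorem IsWalk.append {r' : ℕ} {v' : ℕ → V} {e' : ℕ → E} (h : G.IsWalk r v e)
    (h' : G.IsWalk r' v' e') (hv : v r = v' 0) :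
    G.IsWalk (r + r') (seqAppend r v v') (seqAppend r e e') := by
  intro t ht
  rcases lt_or_ge t r with htr | htr
  · rw [seqAppend_of_lt htr, seqAppend_of_lt htr, seqAppend_of_le hv htr]
    exact h t htr
  · obtain ⟨t, rfl⟩ := Nat.exists_eq_add_of_le htr
    rw [add_assoc, seqAppend_add, seqAppend_add, seqAppend_add]
    exact h' t (by omega)

theorem IsWalk.reverse (h : G.IsWalk r v e) :
    G.IsWalk r (fun t => v (r - t)) (fun t => e (r - 1 - t)) := by
  intro t ht
  obtain ⟨h₁, h₂⟩ := h (r - 1 - t) (by omega)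
  rw [show r - 1 - t + 1 = r - t by omega] at h₂
  dsimp only
  rw [show r - (t + 1) = r - 1 - t by omega]
  exact ⟨h₂, h₁⟩

theorem IsWalk.snoc (h : G.IsWalk r v e) {e₀ : E} {z : V} (hv : G.sign (v r) e₀ ≠ 0)
    (hz : G.sign z e₀ ≠ 0) :
    G.IsWalk (r + 1) (Function.update v (r + 1) z) (Function.update e r e₀) := by
  intro t ht
  rcases Nat.lt_succ_iff_lt_or_eq.mp ht with ht | rfl
  · rw [Function.update_of_ne (by omega), Function.update_of_ne (by omega),
      Function.update_of_ne (by omega)]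
    exact h t ht
  · rw [Function.update_of_ne (by omega), Function.update_self, Function.update_self]
    exact ⟨hv, hz⟩

end Walks

variable [Fintype V] (G : SignedHypergraph V E) (f : V → ℝ)

theorem edgeSign_ne_zero (e : E) : G.edgeSign e ≠ 0 :=
  mul_ne_zero (pow_ne_zero _ (by norm_num))
    (prod_ne_zero_iff.mpr fun _ hv => (mem_filter.mp hv).2)

noncomputable def signProd (e : ℕ → E) (i j : ℕ) : ℝ :=
  ∏ t ∈ Ico i j, G.edgeSign (e t)

def IsSeqWPath (r : ℕ) (v : ℕ → V) (e : ℕ → E) : Prop :=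
  G.IsWalk r v e ∧ ∀ i j, i < j → j ≤ r → f (v i) ≠ 0 → f (v j) ≠ 0 →
    (∀ t, i < t → t < j → f (v t) = 0) → 0 < f (v i) * G.signProd e i j * f (v j)

def IsLink (r : ℕ) (v : ℕ → V) (e : ℕ → E) : Prop :=
  G.IsWalk r v e ∧ (∀ t, 0 < t → t < r → f (v t) = 0) ∧ 0 < f (v 0) * G.signProd e 0 r * f (v r)

inductive ZeroReach (y : V) : V → ℝ → Prop
  | refl : ZeroReach y y 1
  | tail {z z' : V} {s : ℝ} {e : E} : ZeroReach y z s → G.sign z e ≠ 0 → G.sign z' e ≠ 0 →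
      f z' = 0 → ZeroReach y z' (s * G.edgeSign e)

variable {G f}

section Paths

variable {r : ℕ} {v : ℕ → V} {e : ℕ → E}

theorem signProd_congr {e' : ℕ → E} {i j : ℕ} (h : ∀ t, i ≤ t → t < j → e t = e' t) :
    G.signProd e i j = G.signProd e' i j :=
  prod_congr rfl fun t ht => by rw [h t (mem_Ico.mp ht).1 (mem_Ico.mp ht).2]

theorem signProd_add (i j : ℕ) :
    G.signProd e (r + i) (r + j) = G.signProd (fun t => e (r + t)) i j := by
  rw [signProd, signProd, add_comm r i, add_comm r j, ← prod_Ico_add]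

theorem signProd_reverse : G.signProd (fun t => e (r - 1 - t)) 0 r = G.signProd e 0 r := by
  simp only [signProd, ← range_eq_Ico]
  exact prod_range_reflect (fun t => G.edgeSign (e t)) r

theorem signProd_snoc (e₀ : E) :
    G.signProd (Function.update e r e₀) 0 (r + 1) = G.signProd e 0 r * G.edgeSign e₀ := by
  rw [signProd, prod_Ico_succ_top (Nat.zero_le r), Function.update_self]
  congr 1
  exact signProd_congr fun t _ ht => Function.update_of_ne (by omega) _ _

theorem prod_ite_eq_signProd (e : ℕ → E) {i j : ℕ} (hj : j ≤ r) :
    (∏ t : Fin r, if i ≤ (t : ℕ) ∧ (t : ℕ) < j then G.edgeSign (e t) else 1) =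
      G.signProd e i j := by
  rw [Fin.prod_univ_eq_prod_range (fun t => if i ≤ t ∧ t < j then G.edgeSign (e t) else 1) r,
    ← prod_filter, signProd]
  congr 1
  ext t
  simp only [mem_filter, mem_range, mem_Ico]
  omega

theorem isWPath_iff_isSeqWPath (v : ℕ → V) (e : ℕ → E) :
    G.IsWPath f (fun i : Fin (r + 1) => v i) (fun t : Fin r => e t) ↔ G.IsSeqWPath f r v e := by
  constructor
  · rintro ⟨hw, hp⟩
    refine ⟨fun t ht => hw ⟨t, ht⟩, fun i j hij hjr hi hj hz => ?_⟩
    have := hp ⟨i, by omega⟩ ⟨j, by omega⟩ hij hi hj fun k hik hkj => hz k hik hkj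
    rwa [prod_ite_eq_signProd e hjr] at this
  · rintro ⟨hw, hp⟩
    refine ⟨fun t => hw t t.isLt, fun i j hij hi hj hz => ?_⟩
    rw [prod_ite_eq_signProd e (Nat.lt_succ_iff.mp j.isLt)]
    exact hp i j hij (Nat.lt_succ_iff.mp j.isLt) hi hj fun t hit htj => hz ⟨t, by omega⟩ hit htj

theorem IsSeqWPath.wRel (h : G.IsSeqWPath f r v e) : G.wRel f (v 0) (v r) :=
  Or.inr ⟨r, _, _, (isWPath_iff_isSeqWPath v e).2 h, rfl, rfl⟩

theorem wRel.exists_isSeqWPath [Nonempty E] {x y : V} (h : G.wRel f x y) :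
    ∃ r v e, G.IsSeqWPath f r v e ∧ v 0 = x ∧ v r = y := by
  rcases h with rfl | ⟨r, v, e, hp, rfl, rfl⟩
  · exact ⟨0, fun _ => x, fun _ => Classical.arbitrary E,
      ⟨fun t ht => absurd ht t.not_lt_zero, fun i j hij hj => absurd hj (by omega)⟩, rfl, rfl⟩
  let v' : ℕ → V := fun n => if h : n < r + 1 then v ⟨n, h⟩ else v 0
  let e' : ℕ → E := fun n => if h : n < r then e ⟨n, h⟩ else Classical.arbitrary E
  have hv : (fun i : Fin (r + 1) => v' i) = v := funext fun i => dif_pos i.isLt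
  have he : (fun t : Fin r => e' t) = e := funext fun t => dif_pos t.isLt
  exact ⟨r, v', e', (isWPath_iff_isSeqWPath v' e').1 (hv ▸ he ▸ hp), congrFun hv 0,
    congrFun hv (Fin.last r)⟩

theorem IsSeqWPath.append {r' : ℕ} {v' : ℕ → V} {e' : ℕ → E} (h : G.IsSeqWPath f r v e)
    (h' : G.IsSeqWPath f r' v' e') (hv : v r = v' 0) (hfv : f (v' 0) ≠ 0) :
    G.IsSeqWPath f (r + r') (seqAppend r v v') (seqAppend r e e') := by
  refine ⟨h.1.append h'.1 hv, fun i j hij hjr hi hj hz => ?_⟩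
  rcases le_or_gt j r with hj' | hj'
  · rw [seqAppend_of_le hv (hij.le.trans hj')] at hi ⊢
    rw [seqAppend_of_le hv hj'] at hj ⊢
    rw [signProd_congr (e' := e) fun t _ ht => seqAppend_of_lt (ht.trans_le hj')]
    refine h.2 i j hij hj' hi hj fun t hit htj => ?_
    simpa [seqAppend_of_le hv (htj.le.trans hj')] using hz t hit htj
  rcases le_or_gt r i with hi' | hi'
  · obtain ⟨i, rfl⟩ := Nat.exists_eq_add_of_le hi'
    obtain ⟨j, rfl⟩ := Nat.exists_eq_add_of_le hj'.le
    rw [seqAppend_add] at hi hj ⊢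
    rw [seqAppend_add, signProd_add]
    simp only [seqAppend_add]
    refine h'.2 i j (by omega) (by omega) hi hj fun t hit htj => ?_
    simpa [seqAppend_add] using hz (r + t) (by omega) (by omega)
  · exact absurd (hz r hi' hj') (by rwa [seqAppend_of_le hv le_rfl, hv])

theorem IsLink.isSeqWPath (h : G.IsLink f r v e) : G.IsSeqWPath f r v e := by
  refine ⟨h.1, fun i j hij hjr hi hj _ => ?_⟩
  obtain rfl : i = 0 := by_contra fun h0 => hi (h.2.1 i (by omega) (by omega))
  obtain rfl : j = r := by_contra fun hr => hj (h.2.1 j (by omega) (by omega))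
  exact h.2.2

theorem IsLink.reverse (h : G.IsLink f r v e) :
    G.IsLink f r (fun t => v (r - t)) (fun t => e (r - 1 - t)) := by
  refine ⟨h.1.reverse, fun t ht htr => h.2.1 (r - t) (by omega) (by omega), ?_⟩
  rw [signProd_reverse]
  simpa only [Nat.sub_zero, Nat.sub_self, mul_comm, mul_left_comm] using h.2.2

theorem IsLink.weakDomain_subset (h : G.IsLink f r v e) :
    G.weakDomain f (v r) ⊆ G.weakDomain f (v 0) := by
  have : Nonempty E := ⟨e 0⟩
  rintro x ⟨m, hm, hrm, hxm⟩
  refine ⟨m, hm, ?_, hxm⟩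
  obtain ⟨r', v', e', hp, h0, hr'⟩ := hrm.exists_isSeqWPath
  have hfv : f (v' 0) ≠ 0 := h0 ▸ right_ne_zero_of_mul h.2.2.ne'
  have := (h.isSeqWPath.append hp h0.symm hfv).wRel
  rwa [seqAppend_add, hr', seqAppend_of_le h0.symm (Nat.zero_le r)] at this

theorem IsLink.weakDomain_eq (h : G.IsLink f r v e) :
    G.weakDomain f (v 0) = G.weakDomain f (v r) := by
  have h' := h.reverse.weakDomain_subset
  simp only [Nat.sub_zero, Nat.sub_self] at h'
  exact h'.antisymm h.weakDomain_subset

end Paths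

section ZeroReach

variable {y z : V} {s : ℝ}

theorem ZeroReach.eq_or_eq_zero (h : G.ZeroReach f y z s) : z = y ∨ f z = 0 := by
  cases h with
  | refl => exact Or.inl rfl
  | tail _ _ _ hz => exact Or.inr hz

theorem ZeroReach.sign_ne_zero (h : G.ZeroReach f y z s) : s ≠ 0 := by
  induction h with
  | refl => exact one_ne_zero
  | tail _ _ _ _ ih => exact mul_ne_zero ih (G.edgeSign_ne_zero _)

theorem ZeroReach.exists_isWalk [Nonempty E] (h : G.ZeroReach f y z s) :
    ∃ r v e, G.IsWalk r v e ∧ v 0 = y ∧ v r = z ∧ (∀ t, 0 < t → t ≤ r → f (v t) = 0) ∧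
      G.signProd e 0 r = s := by
  induction h with
  | refl =>
    exact ⟨0, fun _ => y, fun _ => Classical.arbitrary E, fun t ht => absurd ht t.not_lt_zero,
      rfl, rfl, fun t ht ht' => absurd ht' (by omega), by simp [signProd]⟩
  | @tail z z' s e₀ _ hz hz' hfz' ih =>
    obtain ⟨r, v, e, hw, h0, hr, hzero, hs⟩ := ih
    refine ⟨r + 1, Function.update v (r + 1) z', Function.update e r e₀,
      hw.snoc (hr ▸ hz) hz', ?_, Function.update_self .., fun t ht htr => ?_, ?_⟩
    · rwa [Function.update_of_ne (by omega)]
    · rcases Nat.lt_succ_iff_lt_or_eq.mp (Nat.lt_succ_iff.mpr htr) with htr | rfl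
      · rw [Function.update_of_ne (by omega)]
        exact hzero t ht (by omega)
      · rwa [Function.update_self]
    · rw [signProd_snoc, hs]

theorem ZeroReach.exists_isLink {y' : V} {e : E} (h : G.ZeroReach f y z s)
    (hz : G.sign z e ≠ 0) (hy' : G.sign y' e ≠ 0) (hpos : 0 < f y * s * G.edgeSign e * f y') :
    ∃ r v e, G.IsLink f r v e ∧ v 0 = y ∧ v r = y' := by
  have : Nonempty E := ⟨e⟩
  obtain ⟨r, v, e', hw, h0, hr, hzero, hs⟩ := h.exists_isWalk
  refine ⟨r + 1, Function.update v (r + 1) y', Function.update e' r e,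
    ⟨hw.snoc (hr ▸ hz) hy', fun t ht htr => ?_, ?_⟩, ?_, Function.update_self ..⟩
  · rw [Function.update_of_ne (by omega)]
    exact hzero t ht (by omega)
  · rw [signProd_snoc, hs, Function.update_self, Function.update_of_ne (by omega), h0, ← mul_assoc]
    exact hpos
  · rwa [Function.update_of_ne (by omega)]

theorem weakDomain_eq_of_zeroReach {y' : V} {e : E} (h : G.ZeroReach f y z s)
    (hz : G.sign z e ≠ 0) (hy' : G.sign y' e ≠ 0) (hpos : 0 < f y * s * G.edgeSign e * f y') :
    G.weakDomain f y = G.weakDomain f y' := by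
  obtain ⟨r, v, e, hl, rfl, rfl⟩ := h.exists_isLink hz hy' hpos
  exact hl.weakDomain_eq

end ZeroReach

theorem edgeSign_mul_mul_neg {x y : V} {e : E} (hx : G.sign x e ≠ 0) (hy : G.sign y e ≠ 0)
    (hfx : f x ≠ 0) (hfy : f y ≠ 0) (hne : G.weakDomain f x ≠ G.weakDomain f y) :
    G.edgeSign e * f x * f y < 0 := by
  refine lt_of_le_of_ne (not_lt.mp fun hpos => hne ?_)
    (mul_ne_zero (mul_ne_zero (G.edgeSign_ne_zero e) hfx) hfy)
  exact weakDomain_eq_of_zeroReach .refl hx hy (by linarith)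

/-- The nonzero neighbours `y` of a zero `z` lie in at most two weak domains, told apart by the
sign of `sgn e' · f y`. -/
theorem weakDomain_eq_or_eq {z u v y : V} {s : ℝ} {e e' : E} (hz : f z = 0)
    (hzu : G.sign z e ≠ 0) (hu : G.sign u e ≠ 0) (hfu : f u ≠ 0) (hv : G.ZeroReach f v z s)
    (hfv : f v ≠ 0) (huv : G.weakDomain f u ≠ G.weakDomain f v) (hzy : G.sign z e' ≠ 0)
    (hy : G.sign y e' ≠ 0) (hfy : f y ≠ 0) :
    (G.weakDomain f y = G.weakDomain f u ∧ 0 < G.edgeSign e' * f y * (G.edgeSign e * f u)) ∨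
      G.weakDomain f y = G.weakDomain f v := by
  have hvu : f v * s * (G.edgeSign e * f u) < 0 := by
    refine lt_of_le_of_ne (not_lt.mp fun h => huv (weakDomain_eq_of_zeroReach hv hzu hu ?_).symm)
      (mul_ne_zero (mul_ne_zero hfv hv.sign_ne_zero) (mul_ne_zero (G.edgeSign_ne_zero e) hfu))
    linarith
  by_cases hpos : 0 < G.edgeSign e' * f y * (G.edgeSign e * f u)
  · refine Or.inl ⟨weakDomain_eq_of_zeroReach (ZeroReach.refl.tail hy hzy hz) hzu hu ?_, hpos⟩
    linarith
  · have hneg : G.edgeSign e' * f y * (G.edgeSign e * f u) < 0 :=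
      lt_of_le_of_ne (not_lt.mp hpos) (mul_ne_zero (mul_ne_zero (G.edgeSign_ne_zero e') hfy)
        (mul_ne_zero (G.edgeSign_ne_zero e) hfu))
    refine Or.inr (weakDomain_eq_of_zeroReach hv hzy hy ?_).symm
    nlinarith [mul_pos_of_neg_of_neg hvu hneg, sq_nonneg (G.edgeSign e * f u)]

variable (G f)

theorem weakDomainCount_eq_card :
    G.weakDomainCount f = ((univ.filter fun v => f v ≠ 0).image (G.weakDomain f)).card := by
  rw [weakDomainCount, ← Set.ncard_coe_finset]
  congr 1
  ext D
  simp only [IsWeakNodalDomain, coe_image, coe_filter, mem_univ, true_and, Set.mem_image,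
    Set.mem_ofPred_eq, eq_comm]

theorem componentsOn_univ_eq_card : G.componentsOn univ (fun _ => True) =
    (univ.image fun v => {u | Relation.ReflTransGen G.Adjacent v u}).card := by
  rw [componentsOn, ← Set.ncard_coe_finset]
  congr 1
  ext C
  simp only [mem_coe, mem_image, mem_univ, true_and, Set.mem_ofPred_eq]
  exact exists_congr fun v => eq_comm

theorem componentsOn_univ_eq_one [Nonempty V] (hG : G.Connected) :
    G.componentsOn univ (fun _ => True) = 1 := by
  rw [componentsOn_univ_eq_card, card_eq_one]
  refine ⟨Set.univ, eq_singleton_iff_unique_mem.mpr ⟨?_, fun C hC => ?_⟩⟩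
  · simpa using ⟨Classical.arbitrary V, Set.eq_univ_of_forall (hG _)⟩
  · obtain ⟨v, -, rfl⟩ := mem_image.mp hC
    exact Set.eq_univ_of_forall (hG v)

variable [Fintype E]

noncomputable def dInnerForm : LinearMap.BilinForm ℝ (V → ℝ) :=
  LinearMap.mk₂ ℝ G.dInner
    (fun _ _ _ => by simp only [dInner, ← sum_add_distrib, Pi.add_apply]; congr; ext; ring)
    (fun _ _ _ => by simp only [dInner, mul_sum, Pi.smul_apply, smul_eq_mul]; congr; ext; ring)
    (fun _ _ _ => by simp only [dInner, ← sum_add_distrib, Pi.add_apply]; congr; ext; ring)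
    (fun _ _ _ => by simp only [dInner, mul_sum, Pi.smul_apply, smul_eq_mul]; congr; ext; ring)

@[simp]
theorem dInnerForm_apply (u w : V → ℝ) : G.dInnerForm u w = G.dInner u w := rfl

theorem dInner_comm (u w : V → ℝ) : G.dInner u w = G.dInner w u :=
  sum_congr rfl fun _ _ => by ring

theorem dInner_self_nonneg (u : V → ℝ) : 0 ≤ G.dInner u u :=
  sum_nonneg fun v _ => by rw [mul_assoc]; exact mul_nonneg (Nat.cast_nonneg _) (mul_self_nonneg _)

theorem apply_eq_zero_of_dInner_self_eq_zero {u : V → ℝ} (h : G.dInner u u = 0) {x : V}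
    (hx : G.deg x ≠ 0) : u x = 0 := by
  have := (sum_eq_zero_iff_of_nonneg fun v _ => by
    rw [mul_assoc]; exact mul_nonneg (Nat.cast_nonneg (G.deg v)) (mul_self_nonneg (u v))).mp h x
    (mem_univ x)
  simpa [hx] using this

variable [DecidableEq V]

theorem adj_apply_of_ne {x y : V} (h : x ≠ y) :
    G.adj x y = ∑ e ∈ univ.filter (fun e => G.sign x e ≠ 0 ∧ G.sign y e ≠ 0), G.edgeSign e :=
  if_neg h

theorem adj_self (x : V) : G.adj x x = 0 :=
  if_pos rfl

theorem adj_isSymm : G.adj.IsSymm :=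
  IsSymm.ext fun x y => by
    by_cases h : x = y
    · rw [h]
    · simp only [adj_apply_of_ne G h, adj_apply_of_ne G (Ne.symm h), and_comm]

theorem dotProduct_adj_mulVec_comm (u w : V → ℝ) : u ⬝ᵥ (G.adj *ᵥ w) = w ⬝ᵥ (G.adj *ᵥ u) := by
  rw [dotProduct_mulVec, ← mulVec_transpose, G.adj_isSymm.eq, dotProduct_comm]

theorem adj_eq_zero_of_deg_eq_zero {x : V} (h : G.deg x = 0) (y : V) : G.adj x y = 0 := by
  by_cases hxy : x = y
  · exact if_pos hxy
  · rw [adj_apply_of_ne G hxy]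
    refine sum_eq_zero fun e he => absurd ?_ (card_eq_zero.mp h ▸ notMem_empty e)
    exact mem_filter.mpr ⟨mem_univ e, (mem_filter.mp he).2.1⟩

theorem adj_mulVec_apply (u : V → ℝ) (x : V) :
    (G.adj *ᵥ u) x = ∑ y ∈ univ.erase x,
      ∑ e ∈ univ.filter (fun e => G.sign x e ≠ 0 ∧ G.sign y e ≠ 0), G.edgeSign e * u y := by
  rw [mulVec, dotProduct, ← sum_erase_add _ _ (mem_univ x), adj_self, zero_mul, add_zero]
  exact sum_congr rfl fun y hy => by rw [adj_apply_of_ne G (ne_of_mem_erase hy).symm, sum_mul]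

theorem lap_mulVec_apply (u : V → ℝ) (x : V) :
    (G.lap *ᵥ u) x = u x - (G.adj *ᵥ u) x / G.deg x := by
  simp only [lap, mulVec, dotProduct, of_apply, sub_mul, sum_sub_distrib, ite_mul, one_mul,
    zero_mul, sum_ite_eq, mem_univ, if_true, sum_div, div_mul_eq_mul_div]

-- Also for isolated vertices (`deg x = 0`, where `/` gives `0`): their row of `adj` vanishes.
theorem deg_mul_adj_mulVec_div (u : V → ℝ) (x : V) :
    G.deg x * ((G.adj *ᵥ u) x / G.deg x) = (G.adj *ᵥ u) x := by
  by_cases hx : G.deg x = 0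
  · simp [hx, mulVec, dotProduct, adj_eq_zero_of_deg_eq_zero G hx]
  · field_simp

theorem adj_mulVec_apply_eq_of_lap {lam : ℝ} {u : V → ℝ} {x : V}
    (h : G.deg x ≠ 0 → (G.lap *ᵥ u) x = lam * u x) :
    (G.adj *ᵥ u) x = (1 - lam) * G.deg x * u x := by
  by_cases hx : G.deg x = 0
  · simp [hx, mulVec, dotProduct, adj_eq_zero_of_deg_eq_zero G hx]
  · have := h hx
    rw [lap_mulVec_apply] at this
    rw [← G.deg_mul_adj_mulVec_div u x, show (G.adj *ᵥ u) x / G.deg x = (1 - lam) * u x by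
      linarith]
    ring

theorem dInner_lap_mulVec (u w : V → ℝ) :
    G.dInner u (G.lap *ᵥ w) = G.dInner u w - u ⬝ᵥ (G.adj *ᵥ w) := by
  simp only [dInner, dotProduct, ← sum_sub_distrib, lap_mulVec_apply]
  refine sum_congr rfl fun x _ => ?_
  linear_combination (-u x) * G.deg_mul_adj_mulVec_div w x

theorem isAdjointPair_lap :
    LinearMap.IsAdjointPair G.dInnerForm G.dInnerForm (toLin' G.lap) (toLin' G.lap) := by
  intro u w
  rw [dInnerForm_apply, dInnerForm_apply, toLin'_apply, toLin'_apply, dInner_comm,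
    dInner_lap_mulVec, dInner_lap_mulVec, dInner_comm, dotProduct_adj_mulVec_comm]

variable {G f} {lam : ℝ}

/-- The discrete ground-state transform. -/
theorem dotProduct_adj_mulVec_mul_sub (hf : ∀ x, (G.adj *ᵥ f) x = (1 - lam) * G.deg x * f x)
    (κ : V → ℝ) :
    (κ * f) ⬝ᵥ (G.adj *ᵥ (κ * f)) - (1 - lam) * G.dInner (κ * f) (κ * f) =
      -(1 / 2) * ∑ x, ∑ y, G.adj x y * f x * f y * (κ x - κ y) ^ 2 := by
  have hdiag : (1 - lam) * G.dInner (κ * f) (κ * f) =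
      ∑ x, ∑ y, G.adj x y * f x * f y * κ x ^ 2 := by
    simp only [dInner, mul_sum]
    refine sum_congr rfl fun x _ => ?_
    have hx : ∑ y, G.adj x y * f x * f y * κ x ^ 2 = κ x ^ 2 * f x * (G.adj *ᵥ f) x := by
      simp only [mulVec, dotProduct, mul_sum]
      exact sum_congr rfl fun y _ => by ring
    rw [hx, hf, Pi.mul_apply]
    ring
  have hcross : (κ * f) ⬝ᵥ (G.adj *ᵥ (κ * f)) =
      ∑ x, ∑ y, G.adj x y * f x * f y * (κ x * κ y) := by
    simp only [dotProduct, mulVec, mul_sum, Pi.mul_apply]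
    exact sum_congr rfl fun x _ => sum_congr rfl fun y _ => by ring
  have hsym : ∑ x, ∑ y, G.adj x y * f x * f y * κ y ^ 2 =
      ∑ x, ∑ y, G.adj x y * f x * f y * κ x ^ 2 := by
    rw [sum_comm]
    exact sum_congr rfl fun x _ => sum_congr rfl fun y _ => by rw [G.adj_isSymm.apply]; ring
  have hsq : ∑ x, ∑ y, G.adj x y * f x * f y * (κ x - κ y) ^ 2 =
      ∑ x, ∑ y, G.adj x y * f x * f y * κ x ^ 2 + ∑ x, ∑ y, G.adj x y * f x * f y * κ y ^ 2 -
        2 * ∑ x, ∑ y, G.adj x y * f x * f y * (κ x * κ y) := by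
    simp only [mul_sum, ← sum_add_distrib, ← sum_sub_distrib]
    exact sum_congr rfl fun x _ => sum_congr rfl fun y _ => by ring
  rw [hdiag, hcross, hsq, hsym]
  ring

theorem adj_mul_mul_nonpos {x y : V} (hfx : f x ≠ 0) (hfy : f y ≠ 0)
    (hne : G.weakDomain f x ≠ G.weakDomain f y) : G.adj x y * f x * f y ≤ 0 := by
  rw [G.adj_apply_of_ne fun h => hne (congrArg _ h), sum_mul, sum_mul]
  exact sum_nonpos fun e he =>
    (edgeSign_mul_mul_neg (mem_filter.mp he).2.1 (mem_filter.mp he).2.2 hfx hfy hne).le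

theorem adj_mul_mul_neg {x y : V} (hfx : f x ≠ 0) (hfy : f y ≠ 0)
    (hne : G.weakDomain f x ≠ G.weakDomain f y) (hxy : G.Adjacent x y) :
    G.adj x y * f x * f y < 0 := by
  obtain ⟨e, hx, hy⟩ := hxy
  rw [G.adj_apply_of_ne fun h => hne (congrArg _ h), sum_mul, sum_mul]
  exact sum_neg (fun e he => edgeSign_mul_mul_neg (mem_filter.mp he).2.1
    (mem_filter.mp he).2.2 hfx hfy hne) ⟨e, mem_filter.mpr ⟨mem_univ e, hx, hy⟩⟩

theorem adj_mul_mul_mul_sq_nonpos (c : Set V → ℝ) (x y : V) :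
    G.adj x y * f x * f y * ((c ∘ G.weakDomain f) x - (c ∘ G.weakDomain f) y) ^ 2 ≤ 0 := by
  by_cases hfx : f x = 0
  · simp [hfx]
  by_cases hfy : f y = 0
  · simp [hfy]
  by_cases hd : G.weakDomain f x = G.weakDomain f y
  · simp [hd]
  · exact mul_nonpos_of_nonpos_of_nonneg (adj_mul_mul_nonpos hfx hfy hd) (sq_nonneg _)

theorem dInner_lap_mulVec_le (hf : ∀ x, (G.adj *ᵥ f) x = (1 - lam) * G.deg x * f x)
    (c : Set V → ℝ) :
    G.dInner ((c ∘ G.weakDomain f) * f) (G.lap *ᵥ ((c ∘ G.weakDomain f) * f)) ≤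
      lam * G.dInner ((c ∘ G.weakDomain f) * f) ((c ∘ G.weakDomain f) * f) := by
  have h := dotProduct_adj_mulVec_mul_sub hf (c ∘ G.weakDomain f)
  have hsum := sum_nonpos fun x (_ : x ∈ univ) => sum_nonpos fun y (_ : y ∈ univ) =>
    adj_mul_mul_mul_sq_nonpos (G := G) (f := f) c x y
  rw [dInner_lap_mulVec]
  nlinarith

variable {c : Set V → ℝ}

theorem weakDomain_mul_eq_of_adjacent (hf : ∀ x, (G.adj *ᵥ f) x = (1 - lam) * G.deg x * f x)
    (hg : ∀ x, (G.adj *ᵥ ((c ∘ G.weakDomain f) * f)) x =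
      (1 - lam) * G.deg x * ((c ∘ G.weakDomain f) * f) x)
    {x y : V} (hfx : f x ≠ 0) (hfy : f y ≠ 0) (hxy : G.Adjacent x y) :
    c (G.weakDomain f x) = c (G.weakDomain f y) := by
  have hquad : ((c ∘ G.weakDomain f) * f) ⬝ᵥ (G.adj *ᵥ ((c ∘ G.weakDomain f) * f)) =
      (1 - lam) * G.dInner ((c ∘ G.weakDomain f) * f) ((c ∘ G.weakDomain f) * f) := by
    simp only [dotProduct, hg, dInner, mul_sum]
    exact sum_congr rfl fun x _ => by ring
  have hsum := dotProduct_adj_mulVec_mul_sub hf (c ∘ G.weakDomain f)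
  rw [hquad, sub_self, zero_eq_mul, or_iff_right (by norm_num)] at hsum
  have hterm := (sum_eq_zero_iff_of_nonpos fun y (_ : y ∈ univ) =>
    adj_mul_mul_mul_sq_nonpos (G := G) (f := f) c x y).mp
    ((sum_eq_zero_iff_of_nonpos fun x (_ : x ∈ univ) => sum_nonpos fun y (_ : y ∈ univ) =>
      adj_mul_mul_mul_sq_nonpos (G := G) (f := f) c x y).mp hsum x (mem_univ x)) y (mem_univ y)
  by_contra hc
  have hd : G.weakDomain f x ≠ G.weakDomain f y := fun h => hc (congrArg c h)
  exact (mul_neg_of_neg_of_pos (adj_mul_mul_neg hfx hfy hd hxy)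
    (sq_pos_of_ne_zero (sub_ne_zero.mpr hc))).ne hterm

/-- Multiplied by `(κ u - κ v) · sgn e · f u`, every term of `(A ((κ - κ v) f)) z = 0` is
nonnegative, and the term of `u` is positive unless `κ u = κ v`. -/
theorem weakDomain_mul_eq_of_zeroReach {z u v : V} {s : ℝ} {e : E}
    (hfz : (G.adj *ᵥ f) z = 0) (hgz : (G.adj *ᵥ ((c ∘ G.weakDomain f) * f)) z = 0)
    (hz : f z = 0) (hzu : G.sign z e ≠ 0) (hu : G.sign u e ≠ 0) (hfu : f u ≠ 0)
    (hv : G.ZeroReach f v z s) (hfv : f v ≠ 0) :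
    c (G.weakDomain f u) = c (G.weakDomain f v) := by
  by_contra hne
  have huv : G.weakDomain f u ≠ G.weakDomain f v := fun h => hne (congrArg c h)
  set κ := c ∘ G.weakDomain f
  have hsum : (G.adj *ᵥ fun y => (κ y - κ v) * f y) z = 0 := by
    simp only [mulVec, dotProduct, sub_mul, mul_sub, sum_sub_distrib] at hfz hgz ⊢
    simp only [Pi.mul_apply] at hgz
    rw [show ∑ y, G.adj z y * (κ v * f y) = κ v * ∑ y, G.adj z y * f y by
      rw [mul_sum]; exact sum_congr rfl fun _ _ => by ring, hfz, hgz]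
    ring
  set a := (κ u - κ v) * (G.edgeSign e * f u)
  have hsum' : ∑ y ∈ univ.erase z, ∑ e' ∈ univ.filter (fun e' => G.sign z e' ≠ 0 ∧ G.sign y e' ≠ 0),
      G.edgeSign e' * ((κ y - κ v) * f y) * a = 0 := by
    have := congrArg (· * a) hsum
    simpa only [adj_mulVec_apply, sum_mul, zero_mul] using this
  have hterm : ∀ y ∈ univ.erase z, ∀ e' ∈ univ.filter (fun e' => G.sign z e' ≠ 0 ∧ G.sign y e' ≠ 0),
      0 ≤ G.edgeSign e' * ((κ y - κ v) * f y) * a := by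
    intro y _ e' he'
    by_cases hfy : f y = 0
    · simp [hfy]
    rcases weakDomain_eq_or_eq hz hzu hu hfu hv hfv huv (mem_filter.mp he').2.1
      (mem_filter.mp he').2.2 hfy with ⟨hyu, hpos⟩ | hyv
    · have hκ : κ y = κ u := congrArg c hyu
      rw [hκ]
      nlinarith [mul_nonneg (sq_nonneg (κ u - κ v)) hpos.le]
    · have hκ : κ y = κ v := congrArg c hyv
      simp [hκ]
  have hmem : u ∈ univ.erase z := mem_erase.mpr ⟨fun h => hfu (h ▸ hz), mem_univ u⟩
  refine (sum_pos' (fun y hy => sum_nonneg (hterm y hy)) ⟨u, hmem, sum_pos' (hterm u hmem)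
    ⟨e, mem_filter.mpr ⟨mem_univ e, hzu, hu⟩, ?_⟩⟩).ne' hsum'
  have : κ u - κ v ≠ 0 := sub_ne_zero.mpr hne
  have : G.edgeSign e * f u ≠ 0 := mul_ne_zero (G.edgeSign_ne_zero e) hfu
  nlinarith [sq_pos_of_ne_zero (mul_ne_zero ‹κ u - κ v ≠ 0› this)]

theorem weakDomain_mul_eq_of_reflTransGen
    (hadj : ∀ x y, f x ≠ 0 → f y ≠ 0 → G.Adjacent x y →
      c (G.weakDomain f x) = c (G.weakDomain f y))
    (hzero : ∀ z, f z = 0 →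
      (G.adj *ᵥ f) z = 0 ∧ (G.adj *ᵥ ((c ∘ G.weakDomain f) * f)) z = 0)
    {u v : V} (hu : f u ≠ 0) (hv : f v ≠ 0) (huv : Relation.ReflTransGen G.Adjacent u v) :
    c (G.weakDomain f u) = c (G.weakDomain f v) := by
  suffices ∀ x, Relation.ReflTransGen G.Adjacent u x →
      ∃ p s, f p ≠ 0 ∧ c (G.weakDomain f p) = c (G.weakDomain f u) ∧ G.ZeroReach f p x s by
    obtain ⟨p, s, -, hc, hp⟩ := this v huv
    obtain rfl := hp.eq_or_eq_zero.resolve_right hv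
    exact hc.symm
  intro x hux
  induction hux with
  | refl => exact ⟨u, 1, hu, rfl, .refl⟩
  | @tail x x' _ hxx' ih =>
    obtain ⟨p, s, hp, hc, hpx⟩ := ih
    obtain ⟨e, hx, hx'⟩ := hxx'
    by_cases hfx' : f x' = 0
    · exact ⟨p, s * G.edgeSign e, hp, hc, hpx.tail hx hx' hfx'⟩
    refine ⟨x', 1, hfx', ?_, .refl⟩
    rw [← hc]
    rcases hpx.eq_or_eq_zero with rfl | hfx
    · exact (hadj x x' hp hfx' ⟨e, hx, hx'⟩).symm
    · exact weakDomain_mul_eq_of_zeroReach (hzero x hfx).1 (hzero x hfx).2 hfx hx hx' hfx' hpx hp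

theorem weakDomain_mul_eq_of_orthogonal {ι : Type*} [Fintype ι] [LinearOrder ι] {lam : ι → ℝ}
    (b : Module.Basis ι ℝ (V → ℝ)) (hmono : Monotone lam)
    (heig : ∀ i, G.lap *ᵥ b i = lam i • b i) {k : ι} (hf : G.lap *ᵥ f = lam k • f)
    (horth : ∀ j < k, G.dInner ((c ∘ G.weakDomain f) * f) (b j) = 0)
    {u v : V} (hu : f u ≠ 0) (hv : f v ≠ 0) (huv : Relation.ReflTransGen G.Adjacent u v) :
    c (G.weakDomain f u) = c (G.weakDomain f v) := by
  have hf' : ∀ x, (G.adj *ᵥ f) x = (1 - lam k) * G.deg x * f x :=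
    fun x => G.adj_mulVec_apply_eq_of_lap fun _ => congrFun hf x
  have hnull := LinearMap.BilinForm.apply_sub_smul_self_eq_zero_of_orthogonal b lam
    G.isAdjointPair_lap G.dInner_self_nonneg heig hmono horth (dInner_lap_mulVec_le hf' c)
  have hg : ∀ x, (G.adj *ᵥ ((c ∘ G.weakDomain f) * f)) x =
      (1 - lam k) * G.deg x * ((c ∘ G.weakDomain f) * f) x :=
    fun x => G.adj_mulVec_apply_eq_of_lap fun hx => sub_eq_zero.mp
      (G.apply_eq_zero_of_dInner_self_eq_zero hnull hx)
  refine weakDomain_mul_eq_of_reflTransGen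
    (fun x y hx hy hxy => weakDomain_mul_eq_of_adjacent hf' hg hx hy hxy)
    (fun z hz => ⟨by rw [hf', hz, mul_zero], by rw [hg]; simp [hz]⟩) hu hv huv

theorem weakDomainCount_le {ι : Type*} [Fintype ι] [LinearOrder ι] {lam : ι → ℝ}
    (b : Module.Basis ι ℝ (V → ℝ)) (hmono : Monotone lam)
    (heig : ∀ i, G.lap *ᵥ b i = lam i • b i) {k : ι} (hf : G.lap *ᵥ f = lam k • f) :
    G.weakDomainCount f ≤ #{j | j < k} + G.componentsOn univ (fun _ => True) := by
  by_contra! hlt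
  rw [weakDomainCount_eq_card, componentsOn_univ_eq_card] at hlt
  let comp : V → Set V := fun v => {u | Relation.ReflTransGen G.Adjacent v u}
  let ℓ : ({j | j < k} : Finset ι) ⊕ univ.image comp → (V → ℝ) →ₗ[ℝ] ℝ :=
    Sum.elim (fun j => G.dInnerForm.flip (b j))
      (fun X => ∑ v ∈ univ.filter (· ∈ X.1), f v • LinearMap.proj v)
  obtain ⟨c, hc, w, hw, hcw⟩ := exists_comp_mul_mem_ker (G.weakDomain f) f ℓ (by
    rwa [Fintype.card_sum, Fintype.card_coe, Fintype.card_coe])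
  have horth (j : ι) (hj : j < k) : G.dInner ((c ∘ G.weakDomain f) * f) (b j) = 0 :=
    hc (.inl ⟨j, mem_filter.mpr ⟨mem_univ j, hj⟩⟩)
  have hcomp := hc (.inr ⟨comp w, mem_image_of_mem comp (mem_univ w)⟩)
  simp only [ℓ, Sum.elim_inr, LinearMap.sum_apply, LinearMap.smul_apply, LinearMap.proj_apply,
    smul_eq_mul] at hcomp
  refine hcw (eq_zero_of_sum_mul_mul_eq_zero (κ := c ∘ G.weakDomain f)
    (mem_filter.mpr ⟨mem_univ w, Relation.ReflTransGen.refl⟩) hw (fun v hv hfv => ?_) hcomp)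
  exact (weakDomain_mul_eq_of_orthogonal b hmono heig hf horth hw hfv (mem_filter.mp hv).2).symm

end SignedHypergraph

variable {V E : Type} [Fintype V] [Fintype E] [DecidableEq V] [DecidableEq E]

theorem stmt7_general (G : SignedHypergraph V E)
    (lam : Fin (Fintype.card V) → ℝ) (Φ : Fin (Fintype.card V) → V → ℝ)
    (hmono : Monotone lam) (heig : ∀ i, G.lap.mulVec (Φ i) = lam i • Φ i)
    (hli : LinearIndependent ℝ Φ)
    (k : Fin (Fintype.card V))
    (f : V → ℝ) (hf : G.lap.mulVec f = lam k • f) :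
    G.weakDomainCount f ≤ (k : ℕ) + G.componentsOn Finset.univ (fun _ => True) ∧
      (G.Connected → G.weakDomainCount f ≤ (k : ℕ) + 1) := by
  have : Nonempty (Fin (Fintype.card V)) := ⟨k⟩
  have : Nonempty V := Fintype.card_pos_iff.mp k.pos
  let b := basisOfLinearIndependentOfCardEqFinrank hli (by simp)
  have hle := SignedHypergraph.weakDomainCount_le b hmono (by simpa [b] using heig) hf
  rw [filter_congr_decidable, filter_gt_eq_Iio, Fin.card_Iio] at hle
  exact ⟨hle, fun hG => G.componentsOn_univ_eq_one hG ▸ hle⟩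

theorem stmt7 (G : SignedHypergraph V E)
    (lam : Fin (Fintype.card V) → ℝ) (Φ : Fin (Fintype.card V) → V → ℝ)
    (hmono : Monotone lam) (heig : ∀ i, G.lap.mulVec (Φ i) = lam i • Φ i)
    (hli : LinearIndependent ℝ Φ)
    (k : Fin (Fintype.card V))
    (f : V → ℝ) (hf0 : f ≠ 0) (hf : G.lap.mulVec f = lam k • f) :
    G.weakDomainCount f ≤ (k : ℕ) + G.componentsOn Finset.univ (fun _ => True) ∧
      (G.Connected → G.weakDomainCount f ≤ (k : ℕ) + 1) :=
  stmt7_general G lam Φ hmono heig hli k f hf
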